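/- arXiv:2009.00349 — 5 statements merged into one kernel-verified Lean document; each statement's English description precedes it below -/
import Mathlib

section
/- Let K and a be natural numbers with 0 < K and a ≤ K. The total variation (statistical) distance between the uniform distribution on {0, ..., K−1} and the distribution of (a + U) where U is uniform on {0, ..., K−1} (without modular reduction, i.e., supported on {a, ..., a+K−1}) equals a/K. In particular, if a < 2^δ and K = 2^(λ+δ), this distance is less than 2^(−λ). -/
/-!
For `a ≤ K` the two uniform densities differ exactly on `{0, …, a-1} ∪ {K, …, a+K-1}`, a set of
`2a` points, each contributing `1/K` to the `ℓ¹` distance.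
-/

open Finset

theorem sum_abs_ite_sub_ite {ι R : Type*} [Ring R] [LinearOrder R] [IsOrderedRing R]
    (s : Finset ι) (p q : ι → Prop) [DecidablePred p] [DecidablePred q] (c : R) :
    ∑ x ∈ s, |(if p x then c else 0) - (if q x then c else 0)|
      = #(s.filter fun x => Xor (p x) (q x)) • |c| := by
  rw [card_eq_sum_ones, sum_filter, sum_smul]
  refine sum_congr rfl fun x _ => ?_
  by_cases hp : p x <;> by_cases hq : q x <;> simp [hp, hq, abs_neg]

theorem range_filter_xor_shift {a K : ℕ} (haK : a ≤ K) :
    (range (a + K)).filter (fun x => Xor (x < K) (a ≤ x ∧ x < a + K))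
      = range a ∪ Ico K (a + K) := by
  ext x
  simp only [mem_filter, mem_range, mem_union, mem_Ico, xor_iff_not_iff]
  omega

theorem card_range_filter_xor_shift {a K : ℕ} (haK : a ≤ K) :
    #((range (a + K)).filter (fun x => Xor (x < K) (a ≤ x ∧ x < a + K))) = 2 * a := by
  rw [range_filter_xor_shift haK, card_union_of_disjoint, card_range, Nat.card_Ico]
  · omega
  · exact disjoint_left.2 fun x hx hx' => by simp only [mem_range, mem_Ico] at hx hx'; omega

theorem div_two_pow_add_lt_zpow_neg {a lam δ : ℕ} (ha : a < 2 ^ δ) :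
    (a : ℝ) / (2 ^ (lam + δ) : ℕ) < (2 : ℝ) ^ (-(lam : ℤ)) := by
  have ha' : (a : ℝ) < 2 ^ δ := by exact_mod_cast ha
  calc (a : ℝ) / (2 ^ (lam + δ) : ℕ) < 2 ^ δ / 2 ^ (lam + δ) := by
        push_cast; gcongr
    _ = (2 : ℝ) ^ (-(lam : ℤ)) := by
        rw [zpow_neg, zpow_natCast, pow_add]; field_simp

theorem stmt_1_general (K a lam δ : ℕ) (haK : a ≤ K) :
    (∑ x ∈ Finset.range (a + K),
        |(if x < K then (1 : ℝ) / K else 0) -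
          (if a ≤ x ∧ x < a + K then (1 : ℝ) / K else 0)|) / 2 = (a : ℝ) / K
    ∧ (a < 2 ^ δ → K = 2 ^ (lam + δ) → (a : ℝ) / K < (2 : ℝ) ^ (-(lam : ℤ))) := by
  refine ⟨?_, fun ha hK => hK ▸ div_two_pow_add_lt_zpow_neg ha⟩
  rw [sum_abs_ite_sub_ite, card_range_filter_xor_shift haK, abs_of_nonneg (by positivity),
    nsmul_eq_mul]
  push_cast
  ring

/-- Total variation distance between uniform on `{0,...,K-1}` and the shift-by-`a`
of that uniform distribution equals `a/K`; in particular it is `< 2^(-λ)` when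
`a < 2^δ` and `K = 2^(λ+δ)`. -/
theorem stmt_1 (K a lam δ : ℕ) (hK : 0 < K) (haK : a ≤ K) :
    (∑ x ∈ Finset.range (a + K),
        |(if x < K then (1 : ℝ) / K else 0) -
          (if a ≤ x ∧ x < a + K then (1 : ℝ) / K else 0)|) / 2 = (a : ℝ) / K
    ∧ (a < 2 ^ δ → K = 2 ^ (lam + δ) → (a : ℝ) / K < (2 : ℝ) ^ (-(lam : ℤ))) :=
  stmt_1_general K a lam δ haK
end

section
/- Let R be a commutative ring, let N ≥ 1, and let s_1, ..., s_N, c_0, c_1, a ∈ R, and M_1, ..., M_N, e_{0,1}, ..., e_{0,N}, e_{1,1}, ..., e_{1,N} ∈ R. Define h_0 = Σ_i (s_i · c_1 + M_i + e_{0,i}) and h_1 = Σ_i (−s_i · a − M_i + e_{1,i}), and let s = Σ_i s_i. Then (c_0 + h_0 + h_1) + s · a = (c_0 + s · c_1) + Σ_i (e_{0,i} + e_{1,i}). In particular, ignoring error terms (e_{0,i} = e_{1,i} = 0 for all i), the decryption of the refreshed ciphertext (c_0 + h_0 + h_1, a) under the collective secret key s equals the decryption of the original ciphertext (c_0, c_1)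 under s. -/
open Finset

theorem sum_decShare_add_sum_reencShare {ι R : Type*} [CommRing R] (t : Finset ι)
    (s M e0 e1 : ι → R) (c1 a : R) :
    ∑ i ∈ t, (s i * c1 + M i + e0 i) + ∑ i ∈ t, (-(s i) * a - M i + e1 i)
      = (∑ i ∈ t, s i) * (c1 - a) + ∑ i ∈ t, (e0 i + e1 i) := by
  rw [← sum_add_distrib, sum_mul, ← sum_add_distrib]
  exact sum_congr rfl fun i _ => by ring

theorem refreshed_add_mul_eq {ι R : Type*} [CommRing R] (t : Finset ι)
    (s M e0 e1 : ι → R) (c0 c1 a : R) :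
    (c0 + ∑ i ∈ t, (s i * c1 + M i + e0 i) + ∑ i ∈ t, (-(s i) * a - M i + e1 i))
        + (∑ i ∈ t, s i) * a
      = (c0 + (∑ i ∈ t, s i) * c1) + ∑ i ∈ t, (e0 i + e1 i) := by
  rw [add_assoc c0, sum_decShare_add_sum_reencShare]
  ring

theorem stmt_2_general {R : Type*} [CommRing R] (N : ℕ)
    (s M e0 e1 : Fin N → R) (c0 c1 a : R) :
    (c0 + (∑ i, (s i * c1 + M i + e0 i)) + (∑ i, (-(s i) * a - M i + e1 i)))
        + (∑ i, s i) * a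
      = (c0 + (∑ i, s i) * c1) + ∑ i, (e0 i + e1 i)
    ∧ ((∀ i, e0 i = 0) → (∀ i, e1 i = 0) →
        (c0 + (∑ i, (s i * c1 + M i + e0 i)) + (∑ i, (-(s i) * a - M i + e1 i)))
            + (∑ i, s i) * a
          = c0 + (∑ i, s i) * c1) := by
  refine ⟨refreshed_add_mul_eq univ s M e0 e1 c0 c1 a, fun h0 h1 => ?_⟩
  have noiseless : ∑ i, (e0 i + e1 i) = 0 := sum_eq_zero fun i _ => by rw [h0, h1, add_zero]
  rw [refreshed_add_mul_eq, noiseless, add_zero]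

/-- Algebraic correctness of DBootstrapALT (φ = identity): the masks cancel and
the refreshed ciphertext decrypts, up to accumulated noise, to the same plaintext. -/
theorem stmt_2 {R : Type*} [CommRing R] (N : ℕ) (hN : 1 ≤ N)
    (s M e0 e1 : Fin N → R) (c0 c1 a : R) :
    (c0 + (∑ i, (s i * c1 + M i + e0 i)) + (∑ i, (-(s i) * a - M i + e1 i)))
        + (∑ i, s i) * a
      = (c0 + (∑ i, s i) * c1) + ∑ i, (e0 i + e1 i)
    ∧ ((∀ i, e0 i = 0) → (∀ i, e1 i = 0) →
        (c0 + (∑ i, (s i * c1 + M i + e0 i)) + (∑ i, (-(s i) * a - M i + e1 i)))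
            + (∑ i, s i) * a
          = c0 + (∑ i, s i) * c1) :=
  stmt_2_general N s M e0 e1 c0 c1 a
end

section
/- Let d ≥ 2 be a natural number and let x be a real number with 1/2 < x < 1. Then x^d / (x^d + (1 − x)^d) > x. -/
section PowerRenormalization

variable {α : Type*} [Field α] [LinearOrder α] [IsStrictOrderedRing α] {x y : α} {n : ℕ}

theorem mul_pow_lt_pow_mul (hy : 0 < y) (hyx : y < x) (hn : 2 ≤ n) :
    x * y ^ n < x ^ n * y := by
  obtain ⟨m, rfl⟩ : ∃ m, n = m + 1 := ⟨n - 1, by omega⟩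
  have hpow : y ^ m < x ^ m := pow_lt_pow_left₀ hyx hy.le (by omega)
  calc x * y ^ (m + 1) = x * y * y ^ m := by ring
    _ < x * y * x ^ m := mul_lt_mul_of_pos_left hpow (by nlinarith)
    _ = x ^ (m + 1) * y := by ring

theorem div_add_lt_pow_div_pow_add (hy : 0 < y) (hyx : y < x) (hn : 2 ≤ n) :
    x / (x + y) < x ^ n / (x ^ n + y ^ n) := by
  have hx : 0 < x := hy.trans hyx
  rw [div_lt_div_iff₀ (by positivity) (by positivity)]
  linarith [mul_pow_lt_pow_mul hy hyx hn]

end PowerRenormalization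

/-- Monotone progress step of the renormalized power iteration for encrypted max:
for `d ≥ 2` and `1/2 < x < 1`, one iteration strictly increases `x`. -/
theorem stmt_7 (d : ℕ) (hd : 2 ≤ d) (x : ℝ) (hx1 : 1 / 2 < x) (hx2 : x < 1) :
    x ^ d / (x ^ d + (1 - x) ^ d) > x := by
  have h := div_add_lt_pow_div_pow_add (x := x) (y := 1 - x) (by linarith) (by linarith) hd
  rwa [add_sub_cancel, div_one] at h
end

section
/- Let d ≥ 2 be a natural number, 1/2 < x_0 < 1, and define the sequence x_{n+1} = x_n^d / (x_n^d + (1 − x_n)^d). Then (x_n) is strictly increasing and converges to 1. -/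
/-!
The map `f a = aᵈ / (aᵈ + (1 - a)ᵈ)` sends `(1/2, 1)` into itself and satisfies `a < f a` there,
because `a (1 - a)ᵈ < aᵈ (1 - a)` reduces to `(1 - a)ᵈ⁻¹ < aᵈ⁻¹`. Hence the orbit increases and is
bounded by `1`; its limit `L ∈ (1/2, 1]` is a fixed point of the continuous map `f`, and since `f`
has no fixed point in `(1/2, 1)`, `L = 1`.
-/

open Filter Set Function

noncomputable def renormPow (d : ℕ) (a : ℝ) : ℝ := a ^ d / (a ^ d + (1 - a) ^ d)

namespace renormPow

variable {d : ℕ} {a : ℝ}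

lemma lt_one (ha : 0 < a) (ha' : a < 1) : renormPow d a < 1 := by
  have hden : 0 < a ^ d + (1 - a) ^ d := by positivity
  rw [renormPow, div_lt_one hden]
  linarith [pow_pos (sub_pos.2 ha') d]

lemma lt_self (hd : 2 ≤ d) (ha : 1 / 2 < a) (ha' : a < 1) : a < renormPow d a := by
  obtain ⟨e, rfl⟩ : ∃ e, d = e + 1 := ⟨d - 1, by omega⟩
  have hb : 0 < 1 - a := by linarith
  have hpow : (1 - a) ^ e < a ^ e := pow_lt_pow_left₀ (by linarith) hb.le (by omega)
  have hcross : a * (1 - a) ^ (e + 1) < a ^ (e + 1) * (1 - a) := by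
    rw [pow_succ, pow_succ]
    nlinarith [mul_lt_mul_of_pos_left hpow (mul_pos (by linarith : 0 < a) hb)]
  rw [renormPow, lt_div_iff₀ (by positivity)]
  linarith

lemma mapsTo_Ioo (hd : 2 ≤ d) : MapsTo (renormPow d) (Ioo (1 / 2) 1) (Ioo (1 / 2) 1) :=
  fun _ ⟨ha, ha'⟩ => ⟨ha.trans (lt_self hd ha ha'), lt_one (by linarith) ha'⟩

lemma continuousAt (ha : 0 < a) (ha' : a ≤ 1) : ContinuousAt (renormPow d) a := by
  have hden : a ^ d + (1 - a) ^ d ≠ 0 := by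
    have : 0 ≤ 1 - a := by linarith
    positivity
  unfold renormPow
  fun_prop (disch := exact hden)

end renormPow

/-- The renormalized power iteration `xₙ₊₁ = xₙᵈ/(xₙᵈ+(1−xₙ)ᵈ)` started in `(1/2,1)`
is strictly increasing and converges to `1`. -/
theorem stmt_8 (d : ℕ) (hd : 2 ≤ d) (x : ℕ → ℝ)
    (h0 : 1 / 2 < x 0) (h0' : x 0 < 1)
    (hrec : ∀ n, x (n + 1) = (x n) ^ d / ((x n) ^ d + (1 - x n) ^ d)) :
    StrictMono x ∧ Filter.Tendsto x Filter.atTop (nhds 1) := by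
  have horbit : x = fun n => (renormPow d)^[n] (x 0) := by
    funext n
    induction n with
    | zero => rfl
    | succ n ih => rw [iterate_succ_apply', ← ih, hrec, renormPow]
  have hmem : ∀ n, x n ∈ Ioo (1 / 2 : ℝ) 1 := fun n => by
    rw [horbit]; exact (renormPow.mapsTo_Ioo hd).iterate n ⟨h0, h0'⟩
  have hmono : StrictMono x := strictMono_nat_of_lt_succ fun n => by
    rw [hrec]; exact renormPow.lt_self hd (hmem n).1 (hmem n).2
  have hbdd : BddAbove (range x) := ⟨1, forall_mem_range.2 fun n => (hmem n).2.le⟩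
  have hlim := tendsto_atTop_ciSup hmono.monotone hbdd
  set L := ⨆ n, x n
  have hL : 1 / 2 < L := h0.trans_le (le_ciSup hbdd 0)
  have hL' : L ≤ 1 := ciSup_le fun n => (hmem n).2.le
  have hfix : renormPow d L = L := by
    rw [horbit] at hlim
    exact isFixedPt_of_tendsto_iterate hlim (renormPow.continuousAt (by linarith) hL')
  have hL1 : L = 1 := hL'.eq_or_lt.resolve_right fun h => (renormPow.lt_self hd hL h).ne' hfix
  exact ⟨hmono, hL1 ▸ hlim⟩
end

section
/- Let G be an additive commutative group and let v : ℤ → G be supported on multiples of s (i.e., v(i) = 0 whenever s does not divide i), where s is a power of two. Define w_0 = v and w_{j+1}(i) = w_j(i) + w_j(i − 2^j). Then after log₂(s) iterations, w_{log₂ s}(q·s + r) = v(q·s) for all integers q and all 0 ≤ r < s; i.e., each nonzero value is replicated into the s consecutive slots to its right. -/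
/-! By induction on `j`, `w j i` is the sum of `v` over the window `(i - 2^j, i]` of length `2^j`.
A window of length `s = 2^m` ending at `q s + r` with `0 ≤ r < s` contains exactly one multiple
of `s`, namely `q s`, so for `v` supported on multiples of `s` only `v (q s)` survives. -/

open Finset

theorem eq_sum_range_two_pow_of_add_shift {G : Type*} [AddCommMonoid G] (w : ℕ → ℤ → G)
    (hstep : ∀ j i, w (j + 1) i = w j i + w j (i - 2 ^ j)) (j : ℕ) (i : ℤ) :
    w j i = ∑ t ∈ range (2 ^ j), w 0 (i - t) := by
  induction j generalizing i with
  | zero => simp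
  | succ j ih =>
    rw [hstep, ih, ih, pow_succ, mul_two, sum_range_add]
    congr 1
    refine sum_congr rfl fun t _ => ?_
    push_cast
    ring_nf

theorem sum_range_sub_eq_of_support_dvd {G : Type*} [AddCommMonoid G] (n : ℕ) (v : ℤ → G)
    (hsupp : ∀ i : ℤ, ¬ (n : ℤ) ∣ i → v i = 0) (q : ℤ) {r : ℕ} (hr : r < n) :
    ∑ t ∈ range n, v (q * n + r - t) = v (q * n) := by
  rw [sum_eq_single_of_mem r (mem_range.mpr hr), add_sub_cancel_right]
  intro t ht htr
  rw [mem_range] at ht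
  refine hsupp _ fun hdvd => htr ?_
  rw [add_sub_assoc, dvd_add_right (dvd_mul_left _ _)] at hdvd
  have hrt := Int.eq_zero_of_abs_lt_dvd hdvd (by rw [abs_lt]; omega)
  omega

/-- Correctness of the RR (Rotate For Replication) primitive: if `v` is supported
on multiples of `s = 2^m`, then after `m` rotate-and-add steps each value `v(q·s)`
is replicated into the `s` consecutive slots to its right. -/
theorem stmt_12 {G : Type*} [AddCommGroup G] (m : ℕ) (v : ℤ → G)
    (hsupp : ∀ i : ℤ, ¬ ((2 ^ m : ℤ) ∣ i) → v i = 0)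
    (w : ℕ → ℤ → G) (h0 : w 0 = v)
    (hstep : ∀ j i, w (j + 1) i = w j i + w j (i - 2 ^ j)) :
    ∀ (q : ℤ) (r : ℕ), r < 2 ^ m →
      w m (q * 2 ^ m + (r : ℤ)) = v (q * 2 ^ m) := by
  intro q r hr
  have hwindow := sum_range_sub_eq_of_support_dvd (2 ^ m) v (by exact_mod_cast hsupp) q hr
  push_cast at hwindow
  rw [eq_sum_range_two_pow_of_add_shift w hstep, h0, hwindow]
end
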